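/- arXiv:1506.00926 — 2 statements merged into one kernel-verified Lean document; each statement's English description precedes it below -/
import Mathlib

section
/- Pohozaev identity for harmonic maps with free boundary on the half-disc: Let n ≥ 2 and let u be a smooth harmonic map with free boundary on 𝔻⁺ ∪ I with values in ℝ^{n+1}. Then for every 0 < r < 1, ∫₀^π |∂_θ[θ ↦ u(r cos θ, r sin θ)]|² dθ = r² ∫₀^π |∂_ρ u(r cos θ, r sin θ)|² dθ, where ∂_ρ u denotes the radial directional derivative of u. -/
open MeasureTheory Filter Topology Set
open scoped RealInnerProductSpace

noncomputable section

/-- The Euclidean plane. -/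
abbrev E2 : Type := EuclideanSpace ℝ (Fin 2)
/-- Euclidean space `ℝ^{n+1}`. -/
abbrev Ey (n : ℕ) : Type := EuclideanSpace ℝ (Fin (n + 1))

/-- Standard basis vectors of the plane. -/
def e2 (i : Fin 2) : E2 := EuclideanSpace.single i 1

/-- The point of the plane with coordinates `(s, t)`. -/
def pt (s t : ℝ) : E2 := WithLp.toLp 2 ![s, t]

/-- The Laplacian of a map on the plane. -/
def lapl {F : Type*} [NormedAddCommGroup F] [NormedSpace ℝ F] (u : E2 → F) (x : E2) : F :=
  ∑ i : Fin 2, fderiv ℝ (fun y => fderiv ℝ u y (e2 i)) x (e2 i)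

/-- The squared (Frobenius) norm `|∇u|² = Σ_j |∇u_j|²` of the gradient. -/
def gradSq {F : Type*} [NormedAddCommGroup F] [NormedSpace ℝ F] (u : E2 → F) (x : E2) : ℝ :=
  ∑ i : Fin 2, ‖fderiv ℝ u x (e2 i)‖ ^ 2

/-- The open half-disc `𝔻⁺_ρ` of radius `ρ`. -/
def halfDisc (ρ : ℝ) : Set E2 := {x | x 0 ^ 2 + x 1 ^ 2 < ρ ^ 2 ∧ 0 < x 1}

/-- The closed half-disc of radius `ρ`. -/
def closedHalfDisc (ρ : ℝ) : Set E2 := {x | x 0 ^ 2 + x 1 ^ 2 ≤ ρ ^ 2 ∧ 0 ≤ x 1}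

/-- The boundary segment `I = (-1,1) × {0}`. -/
def Iseg : Set E2 := {x | |x 0| < 1 ∧ x 1 = 0}

/-- A smooth harmonic map with free boundary on `𝔻⁺ ∪ I`, i.e. a map smooth on a
neighbourhood of the closed half-disc, harmonic in `𝔻⁺`, with values in the closed unit
ball, unit norm on `I`, where `∂_t u` is parallel to `u` on `I`. -/
structure IsFBHarmonic (n : ℕ) (u : E2 → Ey n) : Prop where
  smooth : ∃ V : Set E2, IsOpen V ∧ closedHalfDisc 1 ⊆ V ∧ ContDiffOn ℝ (⊤ : ℕ∞) u V
  harmonic : ∀ x ∈ halfDisc 1, lapl u x = 0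
  norm_le : ∀ x ∈ closedHalfDisc 1, ‖u x‖ ≤ 1
  norm_eq : ∀ x ∈ Iseg, ‖u x‖ = 1
  free : ∀ x ∈ Iseg, ∃ c : ℝ, fderiv ℝ u x (e2 1) = c • u x

/-- The radial directional derivative `∂_ρ u(z) = (z/|z|) ⬝ ∇u(z)`. -/
def radialDeriv {n : ℕ} (u : E2 → Ey n) (z : E2) : Ey n :=
  fderiv ℝ u z (‖z‖⁻¹ • z)


/-!
The Hopf differential `φ = |u_s|² - |u_t|² - 2i⟨u_s, u_t⟩ = 4 ∑ⱼ (∂_z uⱼ)²` is holomorphic in `𝔻⁺`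
because `u` is harmonic, and it is real on `I` because there `u_t ∥ u` while `u_s ⊥ u` (as
`|u| = 1`). On the circle `z = r e^{iθ}` one has `Re (z² φ(z)) = r² |∂_ρ u|² - |∂_θ u|²`, so the
identity says that `Re ∫₀^π z² φ(z) dθ = 0`. In the coordinate `z = e^w` the half-disc becomes the
half-strip `Re w < log r, 0 < Im w < π`, on whose horizontal edges `e^w · (z φ)(e^w)` is real.
Cauchy's theorem on rectangles then shows that the real part of the integral over a vertical
segment does not depend on `Re w`, and it tends to `0` as `Re w → -∞`.
-/

open Complex Metric
open scoped Interval Real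

def complexToPlane : ℂ ≃ₗᵢ[ℝ] E2 := orthonormalBasisOneI.repr

theorem complexToPlane_apply (z : ℂ) : complexToPlane z = pt z.re z.im := rfl

theorem pt_eq_smul_add (s t : ℝ) : pt s t = s • e2 0 + t • e2 1 := by
  ext i
  fin_cases i <;> simp [pt, e2]

theorem complexToPlane_one : complexToPlane 1 = e2 0 := by
  simp [complexToPlane_apply, pt_eq_smul_add]

theorem complexToPlane_I : complexToPlane I = e2 1 := by
  simp [complexToPlane_apply, pt_eq_smul_add]

theorem complexToPlane_mem_closedHalfDisc_iff {ρ : ℝ} (hρ : 0 ≤ ρ) {z : ℂ} :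
    complexToPlane z ∈ closedHalfDisc ρ ↔ ‖z‖ ≤ ρ ∧ 0 ≤ z.im := by
  rw [← sq_le_sq₀ (norm_nonneg z) hρ, ← normSq_eq_norm_sq, normSq_apply]
  simp [closedHalfDisc, complexToPlane_apply, pt, sq]

theorem complexToPlane_mem_halfDisc_iff {ρ : ℝ} (hρ : 0 ≤ ρ) {z : ℂ} :
    complexToPlane z ∈ halfDisc ρ ↔ ‖z‖ < ρ ∧ 0 < z.im := by
  rw [← sq_lt_sq₀ (norm_nonneg z) hρ, ← normSq_eq_norm_sq, normSq_apply]
  simp [halfDisc, complexToPlane_apply, pt, sq]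

theorem complexToPlane_circleMap (r θ : ℝ) :
    complexToPlane (circleMap 0 r θ) = pt (r * Real.cos θ) (r * Real.sin θ) := by
  simp [complexToPlane_apply, circleMap, exp_ofReal_mul_I_re, exp_ofReal_mul_I_im]

section HopfForm

variable {F : Type*} [NormedAddCommGroup F] [InnerProductSpace ℝ F]

/-- `(a - i b) ⬝ (a - i b)` for the complex-bilinear extension of the inner product. -/
def hopfForm (a b : F) : ℂ := ((‖a‖ ^ 2 - ‖b‖ ^ 2 : ℝ) : ℂ) - ((2 * ⟪a, b⟫ : ℝ) : ℂ) * I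

@[simp] theorem hopfForm_re (a b : F) : (hopfForm a b).re = ‖a‖ ^ 2 - ‖b‖ ^ 2 := by
  simp only [hopfForm, sub_re, ofReal_re, mul_re, ofReal_im, I_re, I_im]
  ring

@[simp] theorem hopfForm_im (a b : F) : (hopfForm a b).im = -(2 * ⟪a, b⟫) := by
  simp only [hopfForm, sub_im, ofReal_re, mul_im, ofReal_im, I_re, I_im]
  ring

theorem re_sq_mul_hopfForm (L : E2 →L[ℝ] F) (z : ℂ) :
    (z ^ 2 * hopfForm (L (e2 0)) (L (e2 1))).re
      = ‖L (complexToPlane z)‖ ^ 2 - ‖L (complexToPlane (z * I))‖ ^ 2 := by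
  simp only [complexToPlane_apply, pt_eq_smul_add, map_add, map_smul, norm_add_sq_real, norm_smul,
    real_inner_smul_left, real_inner_smul_right, mul_pow, Real.norm_eq_abs, sq_abs, mul_re, mul_im,
    hopfForm_re, hopfForm_im, I_re, I_im, pow_two z, mul_neg, mul_zero, mul_one, zero_sub, add_zero,
    neg_mul, even_two, Even.neg_pow]
  ring

theorem differentiableAt_hopfForm_of_cauchyRiemann {a b : ℂ → F} {A B : ℂ →L[ℝ] F} {z : ℂ}
    (ha : HasFDerivAt a A z) (hb : HasFDerivAt b B z) (h₁ : A I = B 1) (h₂ : B I = -A 1) :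
    DifferentiableAt ℂ (fun w => hopfForm (a w) (b w)) z := by
  have hf := (ofRealCLM.hasFDerivAt.comp z (ha.norm_sq.sub hb.norm_sq)).sub
    ((ofRealCLM.hasFDerivAt.comp z ((ha.inner ℝ hb).const_mul 2)).mul_const I)
  refine (hf.complexOfReal_hasFDerivAt ?_).differentiableAt
  apply Complex.ext
  · simp [h₁, h₂, inner_neg_right, real_inner_comm (b z)]
  · simp [h₁, h₂, inner_neg_right, real_inner_comm (b z)]
    ring

end HopfForm

section HopfDifferential

variable {F : Type*} [NormedAddCommGroup F] [InnerProductSpace ℝ F] {u : E2 → F}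

theorem lapl_eq_of_differentiableAt_fderiv {x : E2} (h : DifferentiableAt ℝ (fderiv ℝ u) x) :
    lapl u x = fderiv ℝ (fderiv ℝ u) x (e2 0) (e2 0) + fderiv ℝ (fderiv ℝ u) x (e2 1) (e2 1) := by
  simp [lapl, Fin.sum_univ_two, fderiv_clm_apply h (differentiableAt_const _)]

def hopfDifferential (u : E2 → F) (z : ℂ) : ℂ :=
  hopfForm (fderiv ℝ u (complexToPlane z) (e2 0)) (fderiv ℝ u (complexToPlane z) (e2 1))

theorem continuousAt_hopfDifferential {z : ℂ} (hu : ContDiffAt ℝ 1 u (complexToPlane z)) :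
    ContinuousAt (hopfDifferential u) z := by
  have hD := (hu.continuousAt_fderiv one_ne_zero).comp complexToPlane.continuous.continuousAt
  unfold hopfDifferential hopfForm
  fun_prop

theorem differentiableAt_hopfDifferential {z : ℂ} (hu : ContDiffAt ℝ 2 u (complexToPlane z))
    (hΔ : lapl u (complexToPlane z) = 0) : DifferentiableAt ℂ (hopfDifferential u) z := by
  set H := fderiv ℝ (fderiv ℝ u) (complexToPlane z)
  have hd : DifferentiableAt ℝ (fderiv ℝ u) (complexToPlane z) :=
    (hu.fderiv_right (m := 1) le_rfl).differentiableAt one_ne_zero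
  have hsymm : H (e2 1) (e2 0) = H (e2 0) (e2 1) := hu.isSymmSndFDerivAt (by simp) _ _
  have hharm : H (e2 1) (e2 1) = -H (e2 0) (e2 0) := by
    rw [lapl_eq_of_differentiableAt_fderiv hd] at hΔ
    exact eq_neg_of_add_eq_zero_right hΔ
  have hD : HasFDerivAt (fun w => fderiv ℝ u (complexToPlane w))
      (H.comp (complexToPlane.toContinuousLinearEquiv : ℂ →L[ℝ] E2)) z :=
    hd.hasFDerivAt.comp z complexToPlane.toContinuousLinearEquiv.hasFDerivAt
  have hpartial (i : Fin 2) := hD.clm_apply (hasFDerivAt_const (e2 i) z)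
  refine differentiableAt_hopfForm_of_cauchyRiemann (hpartial 0) (hpartial 1) ?_ ?_
  · simpa [complexToPlane_one, complexToPlane_I] using hsymm
  · simpa [complexToPlane_one, complexToPlane_I] using hharm

end HopfDifferential

theorem HasDerivAt.inner_eq_zero_of_norm_eventually_const {F : Type*} [NormedAddCommGroup F]
    [InnerProductSpace ℝ F] {h : ℝ → F} {h' : F} {s c : ℝ} (hd : HasDerivAt h h' s)
    (hc : ∀ᶠ t in 𝓝 s, ‖h t‖ = c) : ⟪h s, h'⟫ = 0 := by
  have h0 : HasDerivAt (‖h ·‖ ^ 2) 0 s :=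
    (hasDerivAt_const s (c ^ 2)).congr_of_eventuallyEq (hc.mono fun t ht => by simp [ht])
  linarith [hd.norm_sq.unique h0]

theorem pt_mem_Iseg_iff {s : ℝ} : pt s 0 ∈ Iseg ↔ |s| < 1 := by
  simp [Iseg, pt]

theorem Iseg_subset_closedHalfDisc : Iseg ⊆ closedHalfDisc 1 := by
  rintro x ⟨hx0, hx1⟩
  refine ⟨?_, hx1.ge⟩
  rw [hx1, ← sq_abs]
  nlinarith [abs_nonneg (x 0)]

theorem halfDisc_subset_closedHalfDisc (ρ : ℝ) : halfDisc ρ ⊆ closedHalfDisc ρ :=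
  fun _ hx => ⟨hx.1.le, hx.2.le⟩

namespace IsFBHarmonic

variable {n : ℕ} {u : E2 → Ey n}

theorem contDiffAt (hu : IsFBHarmonic n u) {x : E2} (hx : x ∈ closedHalfDisc 1) :
    ContDiffAt ℝ 2 u x := by
  obtain ⟨V, hV, hsub, hC⟩ := hu.smooth
  exact ((hC x (hsub hx)).contDiffAt (hV.mem_nhds (hsub hx))).of_le (WithTop.coe_le_coe.2 le_top)

theorem inner_fderiv_eq_zero (hu : IsFBHarmonic n u) {x : E2} (hx : x ∈ Iseg) :
    ⟪fderiv ℝ u x (e2 0), fderiv ℝ u x (e2 1)⟫ = 0 := by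
  obtain ⟨c, hc⟩ := hu.free x hx
  have hx_eq : pt (x 0) 0 = x := by
    ext i; fin_cases i
    · rfl
    · exact hx.2.symm
  have hline : HasDerivAt (fun s : ℝ => u (pt s 0)) (fderiv ℝ u x (e2 0)) (x 0) := by
    have hpt : HasDerivAt (fun s : ℝ => pt s 0) (e2 0) (x 0) := by
      simpa [pt_eq_smul_add] using (hasDerivAt_id (x 0)).smul_const (e2 0)
    have hu' : HasFDerivAt u (fderiv ℝ u x) (pt (x 0) 0) := hx_eq ▸
      ((hu.contDiffAt (Iseg_subset_closedHalfDisc hx)).differentiableAt two_ne_zero).hasFDerivAt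
    exact hu'.comp_hasDerivAt (x 0) hpt
  have hnorm : ∀ᶠ s in 𝓝 (x 0), ‖u (pt s 0)‖ = 1 :=
    (continuous_abs.continuousAt.eventually_lt continuousAt_const hx.1).mono
      fun s hs => hu.norm_eq _ (pt_mem_Iseg_iff.2 hs)
  have horth := hline.inner_eq_zero_of_norm_eventually_const hnorm
  rw [hx_eq] at horth
  rw [hc, real_inner_smul_right, real_inner_comm, horth, mul_zero]

end IsFBHarmonic

theorem im_intervalIntegral_eq_zero {g : ℝ → ℂ} {a b : ℝ} (hg : ∀ x ∈ [[a, b]], (g x).im = 0) :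
    (∫ x in a..b, g x).im = 0 := by
  rw [intervalIntegral.integral_congr (g := fun x => ((g x).re : ℂ))
    fun x hx => ext (by simp) (by simp [hg x hx]), intervalIntegral.integral_ofReal]
  exact ofReal_im _

theorem re_integral_vertical_edges_eq {f : ℂ → ℂ} {z w : ℂ}
    (hc : ContinuousOn f ([[z.re, w.re]] ×ℂ [[z.im, w.im]]))
    (hd : DifferentiableOn ℂ f
      (Ioo (min z.re w.re) (max z.re w.re) ×ℂ Ioo (min z.im w.im) (max z.im w.im)))
    (hbot : ∀ x ∈ [[z.re, w.re]], (f (x + z.im * I : ℂ)).im = 0)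
    (htop : ∀ x ∈ [[z.re, w.re]], (f (x + w.im * I : ℂ)).im = 0) :
    (∫ y in z.im..w.im, f (w.re + y * I)).re = (∫ y in z.im..w.im, f (z.re + y * I)).re := by
  have h := congrArg im
    (integral_boundary_rect_eq_zero_of_continuousOn_of_differentiableOn f z w hc hd)
  simp only [sub_im, add_im, smul_eq_mul, mul_im, I_re, I_im, zero_mul, one_mul, zero_add,
    im_intervalIntegral_eq_zero hbot, im_intervalIntegral_eq_zero htop, zero_im] at h
  linarith

theorem exp_mem_closedBall_inter {r : ℝ} (hr : 0 < r) {w : ℂ} (hre : w.re ≤ Real.log r)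
    (him : w.im ∈ Icc 0 π) : exp w ∈ closedBall (0 : ℂ) r ∩ {z | 0 ≤ z.im} := by
  refine ⟨?_, ?_⟩
  · rw [mem_closedBall_zero_iff, norm_exp, ← Real.exp_log hr]
    exact Real.exp_le_exp.2 hre
  · simpa [exp_im] using
      mul_nonneg (Real.exp_pos w.re).le (Real.sin_nonneg_of_nonneg_of_le_pi him.1 him.2)

theorem exp_mem_ball_inter {r : ℝ} (hr : 0 < r) {w : ℂ} (hre : w.re < Real.log r)
    (him : w.im ∈ Ioo 0 π) : exp w ∈ ball (0 : ℂ) r ∩ {z | 0 < z.im} := by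
  refine ⟨?_, ?_⟩
  · rw [mem_ball_zero_iff, norm_exp, ← Real.exp_log hr]
    exact Real.exp_lt_exp.2 hre
  · simpa [exp_im] using mul_pos (Real.exp_pos w.re) (Real.sin_pos_of_pos_of_lt_pi him.1 him.2)

theorem re_integral_vertical_eq_zero_of_halfStrip {G : ℂ → ℂ} {a h C : ℝ} (hh : 0 ≤ h)
    (hc : ContinuousOn G (Iic a ×ℂ Icc 0 h)) (hd : DifferentiableOn ℂ G (Iio a ×ℂ Ioo 0 h))
    (hreal : ∀ t ≤ a, (G t).im = 0 ∧ (G (t + h * I)).im = 0)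
    (hdecay : ∀ w ∈ Iic a ×ℂ Icc 0 h, ‖G w‖ ≤ C * Real.exp w.re) :
    (∫ y in (0)..h, G (a + y * I)).re = 0 := by
  have hconst : ∀ x ≤ a, (∫ y in (0)..h, G (a + y * I)).re = (∫ y in (0)..h, G (x + y * I)).re := by
    intro x hx
    have hrect := re_integral_vertical_edges_eq (f := G) (z := x) (w := a + h * I) ?_ ?_ ?_ ?_
    · simpa using hrect
    all_goals simp only [ofReal_re, ofReal_im, add_re, add_im, mul_re, mul_im, I_re, I_im,
      mul_zero, mul_one, sub_zero, zero_add, add_zero, uIcc_of_le hx, uIcc_of_le hh,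
      min_eq_left hx, max_eq_right hx, min_eq_left hh, max_eq_right hh]
    · exact hc.mono (reProdIm_subset_iff.2 (prod_mono Icc_subset_Iic_self subset_rfl))
    · exact hd.mono (reProdIm_subset_iff.2 (prod_mono Ioo_subset_Iio_self subset_rfl))
    · exact fun t ht => by simpa using (hreal t ht.2).1
    · exact fun t ht => (hreal t ht.2).2
  have hbound : ∀ x ≤ a, ‖∫ y in (0)..h, G (x + y * I)‖ ≤ C * Real.exp x * h := by
    intro x hx
    refine (intervalIntegral.norm_integral_le_of_norm_le_const fun y hy => ?_).trans_eq
      (by rw [sub_zero, abs_of_nonneg hh])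
    rw [uIoc_of_le hh] at hy
    simpa using hdecay (x + y * I) (mem_reProdIm.2 (by simpa using ⟨hx, Ioc_subset_Icc_self hy⟩))
  have hlim : Tendsto (fun x => C * Real.exp x * h) atBot (𝓝 0) := by
    simpa using (Real.tendsto_exp_atBot.const_mul C).mul_const h
  have hzero : |(∫ y in (0)..h, G (a + y * I)).re| ≤ 0 :=
    ge_of_tendsto hlim <| eventually_atBot.2 ⟨a, fun x hx =>
      hconst x hx ▸ (abs_re_le_norm _).trans (hbound x hx)⟩
  exact abs_nonpos_iff.1 hzero

theorem re_integral_circleMap_mul_eq_zero {g : ℂ → ℂ} {r : ℝ} (hr : 0 < r)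
    (hc : ContinuousOn g (closedBall 0 r ∩ {z | 0 ≤ z.im}))
    (hd : DifferentiableOn ℂ g (ball 0 r ∩ {z | 0 < z.im}))
    (hreal : ∀ x : ℝ, |x| ≤ r → (g x).im = 0) :
    (∫ θ in (0)..π, circleMap 0 r θ * g (circleMap 0 r θ)).re = 0 := by
  obtain ⟨M, hM⟩ := (isCompact_closedBall (0 : ℂ) r).inter_right
    (isClosed_le continuous_const continuous_im) |>.exists_bound_of_continuousOn hc
  have hreal' : ∀ s : ℝ, |s| ≤ r → ((s : ℂ) * g s).im = 0 := fun s hs => by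
    rw [mul_im, ofReal_im, hreal s hs, mul_zero, zero_mul, add_zero]
  have hexp : ∀ t ≤ Real.log r, |Real.exp t| ≤ r := fun t ht => by
    rw [abs_of_pos (Real.exp_pos t), ← Real.exp_log hr]
    exact Real.exp_le_exp.2 ht
  have h := re_integral_vertical_eq_zero_of_halfStrip (G := fun w => exp w * g (exp w))
    (a := Real.log r) (C := M) Real.pi_pos.le
    (continuous_exp.continuousOn.mul <| hc.comp continuous_exp.continuousOn
      fun w hw => exp_mem_closedBall_inter hr hw.1 hw.2)
    (differentiable_exp.differentiableOn.mul <| hd.comp differentiable_exp.differentiableOn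
      fun w hw => exp_mem_ball_inter hr hw.1 hw.2)
    (fun t ht => ⟨by simpa [← ofReal_exp] using hreal' _ (hexp t ht),
      by simpa [exp_add, ← ofReal_exp] using hreal' _ ((abs_neg _).trans_le (hexp t ht))⟩)
    (fun w hw => by
      simpa [norm_exp, mul_comm] using mul_le_mul_of_nonneg_left
        (hM _ (exp_mem_closedBall_inter hr hw.1 hw.2)) (Real.exp_pos w.re).le)
  simpa [circleMap, exp_add, ← ofReal_exp, Real.exp_log hr] using h

theorem complexToPlane_circleMap_mem_closedHalfDisc {r θ : ℝ} (hr0 : 0 ≤ r) (hr1 : r ≤ 1)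
    (hθ : θ ∈ [[0, π]]) : complexToPlane (circleMap 0 r θ) ∈ closedHalfDisc 1 := by
  rw [uIcc_of_le Real.pi_pos.le] at hθ
  refine (complexToPlane_mem_closedHalfDisc_iff zero_le_one).2 ⟨?_, ?_⟩
  · rwa [norm_circleMap_zero, abs_of_nonneg hr0]
  · simpa [circleMap, exp_ofReal_mul_I_im] using
      mul_nonneg hr0 (Real.sin_nonneg_of_nonneg_of_le_pi hθ.1 hθ.2)

theorem hasDerivAt_comp_circleMap {F : Type*} [NormedAddCommGroup F] [NormedSpace ℝ F]
    {u : E2 → F} {r θ : ℝ} (hu : DifferentiableAt ℝ u (complexToPlane (circleMap 0 r θ))) :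
    HasDerivAt (fun φ => u (pt (r * Real.cos φ) (r * Real.sin φ)))
      (fderiv ℝ u (complexToPlane (circleMap 0 r θ)) (complexToPlane (circleMap 0 r θ * I))) θ := by
  simp_rw [← complexToPlane_circleMap]
  exact hu.hasFDerivAt.comp_hasDerivAt θ
    (complexToPlane.toContinuousLinearEquiv.hasFDerivAt.comp_hasDerivAt θ
      (hasDerivAt_circleMap 0 r θ))

theorem radialDeriv_complexToPlane_circleMap {n : ℕ} (u : E2 → Ey n) (r θ : ℝ) :
    radialDeriv u (complexToPlane (circleMap 0 r θ))
      = |r|⁻¹ • fderiv ℝ u (complexToPlane (circleMap 0 r θ))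
          (complexToPlane (circleMap 0 r θ)) := by
  rw [radialDeriv, LinearIsometryEquiv.norm_map, norm_circleMap_zero, map_smul]

namespace IsFBHarmonic

variable {n : ℕ} {u : E2 → Ey n}

theorem re_integral_circleMap_sq_mul_hopfDifferential_eq_zero (hu : IsFBHarmonic n u) {r : ℝ}
    (hr0 : 0 < r) (hr1 : r < 1) :
    (∫ θ in (0)..π, circleMap 0 r θ ^ 2 * hopfDifferential u (circleMap 0 r θ)).re = 0 := by
  have hmem : ∀ z ∈ closedBall (0 : ℂ) r ∩ {z | 0 ≤ z.im}, complexToPlane z ∈ closedHalfDisc 1 :=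
    fun z hz => (complexToPlane_mem_closedHalfDisc_iff zero_le_one).2
      ⟨(mem_closedBall_zero_iff.1 hz.1).trans hr1.le, hz.2⟩
  have hcont : ContinuousOn (fun z => z * hopfDifferential u z) (closedBall 0 r ∩ {z | 0 ≤ z.im}) :=
    fun z hz => (continuousAt_id.mul (continuousAt_hopfDifferential
      ((hu.contDiffAt (hmem z hz)).of_le one_le_two))).continuousWithinAt
  have hdiff :
      DifferentiableOn ℂ (fun z => z * hopfDifferential u z) (ball 0 r ∩ {z | 0 < z.im}) := by
    intro z hz
    have hz' : complexToPlane z ∈ halfDisc 1 := (complexToPlane_mem_halfDisc_iff zero_le_one).2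
      ⟨(mem_ball_zero_iff.1 hz.1).trans hr1, hz.2⟩
    exact (differentiableAt_id.mul (differentiableAt_hopfDifferential
      (hu.contDiffAt (halfDisc_subset_closedHalfDisc 1 hz')) (hu.harmonic _ hz'))
      ).differentiableWithinAt
  have hreal : ∀ x : ℝ, |x| ≤ r → ((x : ℂ) * hopfDifferential u x).im = 0 := by
    intro x hx
    have hI : complexToPlane x ∈ Iseg := by
      simpa [complexToPlane_apply, pt_mem_Iseg_iff] using hx.trans_lt hr1
    simp [hopfDifferential, mul_im, hu.inner_fderiv_eq_zero hI]
  simpa [sq, mul_assoc] using re_integral_circleMap_mul_eq_zero hr0 hcont hdiff hreal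

theorem continuousOn_fderiv_circleMap (hu : IsFBHarmonic n u) {r : ℝ} (hr0 : 0 ≤ r) (hr1 : r ≤ 1) :
    ContinuousOn (fun θ => fderiv ℝ u (complexToPlane (circleMap 0 r θ))) [[0, π]] :=
  fun θ hθ => ((hu.contDiffAt (complexToPlane_circleMap_mem_closedHalfDisc hr0 hr1 hθ)
    ).continuousAt_fderiv two_ne_zero).comp_continuousWithinAt
      (f := fun θ => complexToPlane (circleMap 0 r θ))
      (by fun_prop : Continuous _).continuousWithinAt

theorem integral_norm_sq_angular_eq_radial (hu : IsFBHarmonic n u) {r : ℝ} (hr0 : 0 < r)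
    (hr1 : r < 1) :
    ∫ θ in (0)..π, ‖fderiv ℝ u (complexToPlane (circleMap 0 r θ))
        (complexToPlane (circleMap 0 r θ * I))‖ ^ 2
      = ∫ θ in (0)..π, ‖fderiv ℝ u (complexToPlane (circleMap 0 r θ))
          (complexToPlane (circleMap 0 r θ))‖ ^ 2 := by
  have hD := hu.continuousOn_fderiv_circleMap hr0.le hr1.le
  have hangular : IntervalIntegrable (fun θ => ‖fderiv ℝ u (complexToPlane (circleMap 0 r θ))
      (complexToPlane (circleMap 0 r θ * I))‖ ^ 2) volume 0 π :=
    ((hD.clm_apply (by fun_prop)).norm.pow 2).intervalIntegrable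
  have hradial : IntervalIntegrable (fun θ => ‖fderiv ℝ u (complexToPlane (circleMap 0 r θ))
      (complexToPlane (circleMap 0 r θ))‖ ^ 2) volume 0 π :=
    ((hD.clm_apply (by fun_prop)).norm.pow 2).intervalIntegrable
  have hhopf : IntervalIntegrable
      (fun θ => circleMap 0 r θ ^ 2 * hopfDifferential u (circleMap 0 r θ)) volume 0 π := by
    unfold hopfDifferential hopfForm
    exact ContinuousOn.intervalIntegrable (by fun_prop)
  have h := hu.re_integral_circleMap_sq_mul_hopfDifferential_eq_zero hr0 hr1
  rw [← RCLike.re_to_complex, ← intervalIntegral.intervalIntegral_re hhopf] at h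
  simp_rw [RCLike.re_to_complex, hopfDifferential, re_sq_mul_hopfForm] at h
  rw [intervalIntegral.integral_sub hradial hangular] at h
  linarith

end IsFBHarmonic

theorem pohozaev_identity_free_boundary_general (n : ℕ) (u : E2 → Ey n)
    (hu : IsFBHarmonic n u) :
    ∀ r : ℝ, 0 < r → r < 1 →
      (∫ θ in (0:ℝ)..Real.pi,
          ‖deriv (fun φ : ℝ => u (pt (r * Real.cos φ) (r * Real.sin φ))) θ‖ ^ 2)
        = r ^ 2 * ∫ θ in (0:ℝ)..Real.pi,
            ‖radialDeriv u (pt (r * Real.cos θ) (r * Real.sin θ))‖ ^ 2 := by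
  intro r hr0 hr1
  calc _ = ∫ θ in (0)..π, ‖fderiv ℝ u (complexToPlane (circleMap 0 r θ))
        (complexToPlane (circleMap 0 r θ * I))‖ ^ 2 := by
        refine intervalIntegral.integral_congr fun θ hθ => ?_
        rw [(hasDerivAt_comp_circleMap ((hu.contDiffAt
          (complexToPlane_circleMap_mem_closedHalfDisc hr0.le hr1.le hθ)).differentiableAt
            two_ne_zero)).deriv]
    _ = ∫ θ in (0)..π, ‖fderiv ℝ u (complexToPlane (circleMap 0 r θ))
          (complexToPlane (circleMap 0 r θ))‖ ^ 2 := hu.integral_norm_sq_angular_eq_radial hr0 hr1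
    _ = _ := by
        rw [← intervalIntegral.integral_const_mul]
        refine intervalIntegral.integral_congr fun θ _ => ?_
        simp only [← complexToPlane_circleMap, radialDeriv_complexToPlane_circleMap, norm_smul,
          mul_pow, norm_inv, Real.norm_eq_abs, abs_abs, inv_pow, sq_abs]
        field_simp

/-- **Pohozaev identity for harmonic maps with free boundary on the half-disc.**
For every `0 < r < 1`,
`∫₀^π |∂_θ[θ ↦ u(r cos θ, r sin θ)]|² dθ = r² ∫₀^π |∂_ρ u(r cos θ, r sin θ)|² dθ`. -/
theorem pohozaev_identity_free_boundary (n : ℕ) (hn : 2 ≤ n) (u : E2 → Ey n)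
    (hu : IsFBHarmonic n u) :
    ∀ r : ℝ, 0 < r → r < 1 →
      (∫ θ in (0:ℝ)..Real.pi,
          ‖deriv (fun φ : ℝ => u (pt (r * Real.cos φ) (r * Real.sin φ))) θ‖ ^ 2)
        = r ^ 2 * ∫ θ in (0:ℝ)..Real.pi,
            ‖radialDeriv u (pt (r * Real.cos θ) (r * Real.sin θ))‖ ^ 2 :=
  pohozaev_identity_free_boundary_general n u hu
end
end

section
/- Inverted harmonic maps satisfy a sphere-type equation: Let n ≥ 2, let U ⊆ ℝ² be open, and let u : U → ℝ^{n+1} be smooth, nowhere vanishing, with Δu = 0 on U. Set v = u/|u|² (the composition of u with the inversion σ(z) = z/|z|²). Then on U one has the pointwise identity div(∇v/|v|⁴) = −2 (|∇v|²/|v|⁶) v, where the divergence is taken componentwise and |∇v|² = Σ_j |∇v_j|². -/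
open MeasureTheory Filter Topology Set
open scoped RealInnerProductSpace

noncomputable section

/-- The divergence of a plane vector field. -/
def divE (F : E2 → E2) (x : E2) : ℝ :=
  ∑ i : Fin 2, fderiv ℝ F x (e2 i) i

/-- The composition `σ ∘ u` of `u` with the inversion `σ(z) = z/|z|²` with respect to the
unit sphere. -/
def invmap {n : ℕ} (u : E2 → Ey n) : E2 → Ey n :=
  fun x => (‖u x‖ ^ 2)⁻¹ • u x

/-- The vector field `X_{i,j} = 2 (v_j ∇v_i − v_i ∇v_j)/|v|⁴`. -/
def Xfield {n : ℕ} (v : E2 → Ey n) (i j : Fin (n + 1)) (x : E2) : E2 :=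
  (2 / ‖v x‖ ^ 4) •
    (v x j • gradient (fun y => v y i) x - v x i • gradient (fun y => v y j) x)

/-! Write `q = |u|²`, so `|v|⁻⁴ = q²`. The inversion `σ` has differential `|z|⁻² R_z` with `R_z` the
reflection in `z^⊥`; hence `σ` is conformal, `|∇v|² = |∇u|²/q²`, and `q² ∂ᵢv = q ∂ᵢu − (∂ᵢq) u`.
Taking `∂ᵢ` and summing, the mixed terms `∂ᵢq ∂ᵢu` cancel, leaving `q Δu − (Δq) u = −(Δq) u`, and
`Δq = 2|∇u|² + 2⟨u, Δu⟩ = 2|∇u|²`. Both sides of the identity thus equal `−2 |∇u|² u_j`. -/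

open EuclideanGeometry

section Calculus

variable {E F : Type*} [NormedAddCommGroup E] [NormedSpace ℝ E]
  [NormedAddCommGroup F] [NormedSpace ℝ F] {x : E}

theorem ContDiffAt.differentiableAt_fderiv_apply {f : E → F} (hf : ContDiffAt ℝ 2 f x) (w : E) :
    DifferentiableAt ℝ (fun y => fderiv ℝ f y w) x :=
  ((hf.fderiv_right (m := 1) le_rfl).differentiableAt one_ne_zero).clm_apply
    (differentiableAt_const w)

theorem ContDiffAt.eventually_differentiableAt {f : E → F} (hf : ContDiffAt ℝ 2 f x) :
    ∀ᶠ y in 𝓝 x, DifferentiableAt ℝ f y :=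
  (hf.eventually (by simp)).mono fun _ hy => hy.differentiableAt two_ne_zero

theorem fderiv_smul_fderiv_sub_fderiv_smul_apply {q : E → ℝ} {u : E → F}
    (hq : ContDiffAt ℝ 2 q x) (hu : ContDiffAt ℝ 2 u x) (w : E) :
    fderiv ℝ (fun y => q y • fderiv ℝ u y w - fderiv ℝ q y w • u y) x w
      = q x • fderiv ℝ (fun y => fderiv ℝ u y w) x w
        - fderiv ℝ (fun y => fderiv ℝ q y w) x w • u x := by
  have hq1 := hq.differentiableAt two_ne_zero
  have hu1 := hu.differentiableAt two_ne_zero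
  have hu' := hu.differentiableAt_fderiv_apply w
  have hq' := hq.differentiableAt_fderiv_apply w
  rw [((hq1.hasFDerivAt.fun_smul hu'.hasFDerivAt).fun_sub
    (hq'.hasFDerivAt.fun_smul hu1.hasFDerivAt)).fderiv]
  simp only [sub_apply, add_apply, smul_apply, ContinuousLinearMap.smulRight_apply]
  abel

end Calculus

section Euclidean

variable {ι H : Type*} [Fintype ι] [NormedAddCommGroup H] [NormedSpace ℝ H]

theorem fderiv_euclidean_apply {f : H → EuclideanSpace ℝ ι} {x : H} (hf : DifferentiableAt ℝ f x)
    (k : ι) (w : H) : fderiv ℝ (fun y => f y k) x w = fderiv ℝ f x w k :=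
  congrArg (· w) ((PiLp.hasFDerivAt_apply (𝕜 := ℝ) 2 (f x) k).comp x hf.hasFDerivAt).fderiv

theorem gradient_euclidean_apply [DecidableEq ι] (f : EuclideanSpace ℝ ι → ℝ)
    (x : EuclideanSpace ℝ ι) (i : ι) :
    gradient f x i = fderiv ℝ f x (EuclideanSpace.single i 1) := by
  rw [← inner_gradient_left, EuclideanSpace.inner_single_right]
  simp

end Euclidean

theorem divE_smul_gradient_apply {ι : Type*} [Fintype ι] {v : E2 → EuclideanSpace ℝ ι}
    {c : E2 → ℝ} {x : E2} (hv : ContDiffAt ℝ 2 v x) (hc : DifferentiableAt ℝ c x) (j : ι) :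
    divE (fun y => c y • gradient (fun z => v z j) y) x
      = (∑ i, fderiv ℝ (fun y => c y • fderiv ℝ v y (e2 i)) x (e2 i)) j := by
  have hcoord (y : E2) (i : Fin 2) :
      (c y • gradient (fun z => v z j) y) i = c y * fderiv ℝ (fun z => v z j) y (e2 i) := by
    rw [PiLp.smul_apply, gradient_euclidean_apply, smul_eq_mul, e2]
  have hdiff (i : Fin 2) : DifferentiableAt ℝ (fun y => c y • fderiv ℝ v y (e2 i)) x :=
    hc.smul (hv.differentiableAt_fderiv_apply (e2 i))
  have hcomp (i : Fin 2) : (fun y => (c y • gradient (fun z => v z j) y) i)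
      =ᶠ[𝓝 x] fun y => (c y • fderiv ℝ v y (e2 i)) j := by
    filter_upwards [hv.eventually_differentiableAt] with y hy
    rw [hcoord, fderiv_euclidean_apply hy, PiLp.smul_apply, smul_eq_mul]
  have hF : DifferentiableAt ℝ (fun y => c y • gradient (fun z => v z j) y) x :=
    differentiableAt_euclidean.2 fun i =>
      (differentiableAt_euclidean.1 (hdiff i) j).congr_of_eventuallyEq (hcomp i)
  rw [divE, WithLp.ofLp_sum, Finset.sum_apply]
  refine Finset.sum_congr rfl fun i _ => ?_
  rw [← fderiv_euclidean_apply hF, (hcomp i).fderiv_eq, fderiv_euclidean_apply (hdiff i)]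

section Inversion

variable {F : Type*} [NormedAddCommGroup F] [InnerProductSpace ℝ F] {z : F}

theorem inversion_zero_one_apply (z : F) : inversion 0 1 z = (‖z‖ ^ 2)⁻¹ • z := by
  simp [inversion, one_div, inv_pow]

theorem norm_inversion_zero_one (z : F) : ‖inversion 0 1 z‖ = ‖z‖⁻¹ := by
  simpa using dist_inversion_center (0 : F) z 1

theorem fderiv_inversion_zero_one_apply (hz : z ≠ 0) (w : F) :
    fderiv ℝ (inversion (0 : F) 1) z w = (‖z‖ ^ 2)⁻¹ • (ℝ ∙ z)ᗮ.reflection w := by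
  rw [(hasFDerivAt_inversion (R := 1) hz).fderiv]
  simp [one_div, inv_pow]

theorem norm_fderiv_inversion_zero_one_apply (hz : z ≠ 0) (w : F) :
    ‖fderiv ℝ (inversion (0 : F) 1) z w‖ = ‖w‖ / ‖z‖ ^ 2 := by
  rw [fderiv_inversion_zero_one_apply hz, norm_smul, LinearIsometryEquiv.norm_map]
  simp [div_eq_inv_mul]

theorem norm_pow_four_smul_fderiv_inversion_zero_one_apply (hz : z ≠ 0) (w : F) :
    ‖z‖ ^ 4 • fderiv ℝ (inversion (0 : F) 1) z w = ‖z‖ ^ 2 • w - (2 * ⟪z, w⟫) • z := by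
  rw [fderiv_inversion_zero_one_apply hz, Submodule.reflection_orthogonal_apply,
    Submodule.reflection_apply, Submodule.starProjection_singleton, RCLike.ofReal_real_eq_id, id]
  have hnorm : ‖z‖ ≠ 0 := norm_ne_zero_iff.2 hz
  match_scalars <;> field_simp

end Inversion

section Composition

variable {E F : Type*} [NormedAddCommGroup E] [NormedSpace ℝ E]
  [NormedAddCommGroup F] [InnerProductSpace ℝ F] {u : E → F} {x : E}

theorem fderiv_norm_sq_comp_apply (hu : DifferentiableAt ℝ u x) (w : E) :
    fderiv ℝ (fun y => ‖u y‖ ^ 2) x w = 2 * ⟪u x, fderiv ℝ u x w⟫ := by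
  rw [hu.hasFDerivAt.norm_sq.fderiv]
  simp

theorem fderiv_fderiv_norm_sq_comp_apply (hu : ContDiffAt ℝ 2 u x) (w : E) :
    fderiv ℝ (fun y => fderiv ℝ (fun z => ‖u z‖ ^ 2) y w) x w
      = 2 * (‖fderiv ℝ u x w‖ ^ 2 + ⟪u x, fderiv ℝ (fun y => fderiv ℝ u y w) x w⟫) := by
  have h : (fun y => fderiv ℝ (fun z => ‖u z‖ ^ 2) y w) =ᶠ[𝓝 x]
      fun y => 2 * ⟪u y, fderiv ℝ u y w⟫ :=
    hu.eventually_differentiableAt.mono fun _ hy => fderiv_norm_sq_comp_apply hy w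
  have hu1 := hu.differentiableAt two_ne_zero
  rw [h.fderiv_eq, fderiv_const_mul (hu1.inner ℝ (hu.differentiableAt_fderiv_apply w)),
    smul_apply, smul_eq_mul, fderiv_inner_apply ℝ hu1 (hu.differentiableAt_fderiv_apply w),
    real_inner_self_eq_norm_sq]
  ring

theorem fderiv_inversion_comp_apply (hu : DifferentiableAt ℝ u x) (h0 : u x ≠ 0) (w : E) :
    fderiv ℝ (fun y => inversion (0 : F) 1 (u y)) x w
      = fderiv ℝ (inversion (0 : F) 1) (u x) (fderiv ℝ u x w) := by
  rw [fderiv_fun_comp x (hasFDerivAt_inversion h0).differentiableAt hu]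
  rfl

theorem norm_pow_four_smul_fderiv_inversion_comp_apply (hu : DifferentiableAt ℝ u x)
    (h0 : u x ≠ 0) (w : E) :
    ‖u x‖ ^ 4 • fderiv ℝ (fun y => inversion (0 : F) 1 (u y)) x w
      = ‖u x‖ ^ 2 • fderiv ℝ u x w - fderiv ℝ (fun y => ‖u y‖ ^ 2) x w • u x := by
  rw [fderiv_inversion_comp_apply hu h0, norm_pow_four_smul_fderiv_inversion_zero_one_apply h0,
    fderiv_norm_sq_comp_apply hu]

end Composition

section Plane

variable {F : Type*} [NormedAddCommGroup F] [InnerProductSpace ℝ F] {u : E2 → F} {x : E2}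

theorem lapl_norm_sq_comp (hu : ContDiffAt ℝ 2 u x) :
    lapl (fun y => ‖u y‖ ^ 2) x = 2 * gradSq u x + 2 * ⟪u x, lapl u x⟫ := by
  simp only [lapl, gradSq, fderiv_fderiv_norm_sq_comp_apply hu, inner_sum, Finset.mul_sum,
    ← Finset.sum_add_distrib, mul_add]

theorem gradSq_inversion_comp (hu : DifferentiableAt ℝ u x) (h0 : u x ≠ 0) :
    gradSq (fun y => inversion (0 : F) 1 (u y)) x = gradSq u x / ‖u x‖ ^ 4 := by
  simp only [gradSq, fderiv_inversion_comp_apply hu h0, norm_fderiv_inversion_zero_one_apply h0,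
    div_pow, Finset.sum_div, ← pow_mul]

theorem sum_fderiv_norm_pow_four_smul_fderiv_inversion_comp (hu : ContDiffAt ℝ 2 u x)
    (h0 : u x ≠ 0) :
    ∑ i, fderiv ℝ (fun y => ‖u y‖ ^ 4 • fderiv ℝ (fun z => inversion (0 : F) 1 (u z)) y (e2 i))
        x (e2 i)
      = ‖u x‖ ^ 2 • lapl u x - lapl (fun y => ‖u y‖ ^ 2) x • u x := by
  have hq : ContDiffAt ℝ 2 (fun y => ‖u y‖ ^ 2) x := hu.norm_sq ℝ
  have hw (w : E2) : (fun y => ‖u y‖ ^ 4 • fderiv ℝ (fun z => inversion (0 : F) 1 (u z)) y w)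
      =ᶠ[𝓝 x] fun y => ‖u y‖ ^ 2 • fderiv ℝ u y w - fderiv ℝ (fun y => ‖u y‖ ^ 2) y w • u y := by
    filter_upwards [hu.eventually_differentiableAt, hu.continuousAt.eventually_ne h0]
      with y hy hy0 using norm_pow_four_smul_fderiv_inversion_comp_apply hy hy0 w
  rw [Finset.sum_congr rfl fun i _ => by
    rw [(hw (e2 i)).fderiv_eq, fderiv_smul_fderiv_sub_fderiv_smul_apply hq hu]]
  simp only [lapl, Finset.sum_sub_distrib, Finset.smul_sum, Finset.sum_smul]

end Plane

theorem inverted_harmonic_sphere_type_equation_general (n : ℕ)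
    (U : Set E2) (hU : IsOpen U) (u : E2 → Ey n)
    (hsm : ContDiffOn ℝ (⊤ : ℕ∞) u U) (hnv : ∀ x ∈ U, u x ≠ 0)
    (hharm : ∀ x ∈ U, lapl u x = 0) :
    ∀ x ∈ U, ∀ j : Fin (n + 1),
      divE (fun y => (‖invmap u y‖ ^ 4)⁻¹ • gradient (fun z => invmap u z j) y) x
        = -2 * (gradSq (invmap u) x / ‖invmap u x‖ ^ 6) * invmap u x j := by
  intro x hx j
  have hu : ContDiffAt ℝ 2 u x := (hsm.contDiffAt (hU.mem_nhds hx)).of_le ENat.LEInfty.out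
  have hu1 := hu.differentiableAt two_ne_zero
  have h0 := hnv x hx
  have hinv : invmap u = fun y => inversion 0 1 (u y) :=
    funext fun y => (inversion_zero_one_apply (u y)).symm
  simp only [hinv, norm_inversion_zero_one, inv_pow, inv_inv]
  rw [divE_smul_gradient_apply (c := fun y => ‖u y‖ ^ 4)
      (contDiffAt_const.inversion contDiffAt_const hu h0) ((hu1.norm ℝ h0).pow 4),
    sum_fderiv_norm_pow_four_smul_fderiv_inversion_comp hu h0, lapl_norm_sq_comp hu, hharm x hx,
    gradSq_inversion_comp hu1 h0, inversion_zero_one_apply]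
  have hnorm : ‖u x‖ ≠ 0 := norm_ne_zero_iff.2 h0
  simp only [smul_zero, inner_zero_right, mul_zero, add_zero, zero_sub, PiLp.neg_apply,
    PiLp.smul_apply, smul_eq_mul, div_inv_eq_mul, neg_mul, neg_inj]
  field_simp

/-- **Inverted harmonic maps satisfy a sphere-type equation.** If `u` is smooth, nowhere
vanishing and harmonic on an open set `U ⊆ ℝ²`, then `v = u/|u|²` satisfies
`div(∇v/|v|⁴) = −2 (|∇v|²/|v|⁶) v` componentwise on `U`. -/
theorem inverted_harmonic_sphere_type_equation (n : ℕ) (hn : 2 ≤ n)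
    (U : Set E2) (hU : IsOpen U) (u : E2 → Ey n)
    (hsm : ContDiffOn ℝ (⊤ : ℕ∞) u U) (hnv : ∀ x ∈ U, u x ≠ 0)
    (hharm : ∀ x ∈ U, lapl u x = 0) :
    ∀ x ∈ U, ∀ j : Fin (n + 1),
      divE (fun y => (‖invmap u y‖ ^ 4)⁻¹ • gradient (fun z => invmap u z j) y) x
        = -2 * (gradSq (invmap u) x / ‖invmap u x‖ ^ 6) * invmap u x j :=
  inverted_harmonic_sphere_type_equation_general n U hU u hsm hnv hharm
end
end
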